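/- arXiv:1310.5543 — 3 statements merged into one kernel-verified Lean document; each statement's English description precedes it below -/
import Mathlib

section
/- Let ν be a finite positive Borel measure on ℝ^d and define K(x,y) = ∫_{ℝ^d} exp(i (x−y)·ξ) dν(ξ). Let Z ⊆ ℝ^d be a Borel set and μ a finite signed Borel measure supported on Z. Then ∫_Z K(x,t) dμ(t) = 0 for all x ∈ Z if and only if μ̂(ξ) = ∫_Z exp(−i x·ξ) dμ(x) = 0 for all ξ in the support of ν. -/
open MeasureTheory

/-- Integral of a complex-valued function against a finite signed Borel measure, via the
Jordan decomposition `μ = μ⁺ - μ⁻`. -/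
noncomputable def csintegral {X : Type*} [MeasurableSpace X]
    (μ : SignedMeasure X) (f : X → ℂ) : ℂ :=
  (∫ x, f x ∂μ.toJordanDecomposition.posPart) -
    (∫ x, f x ∂μ.toJordanDecomposition.negPart)

/-- The support of a positive Borel measure: points all of whose open neighborhoods have
positive measure. -/
def measSupport {X : Type*} [TopologicalSpace X] [MeasurableSpace X]
    (ν : Measure X) : Set X :=
  {x : X | ∀ U : Set X, IsOpen U → x ∈ U → 0 < ν U}

/-! Write `F = μ̂`, a bounded continuous function. Fubini gives
`∫ K(x,t) dμ(t) = ∫ e^{i⟪x,ξ⟫} F(ξ) dν(ξ)`. If this vanishes on `Z`, integrating it once more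
against `μ`, which lives on `Z`, yields `∫ |F|² dν = 0`; so `F` vanishes `ν`-a.e., hence, being
continuous, on the support of `ν`. Conversely the complement of the support is `ν`-null, so
`F = 0` on the support makes the `ν`-integral above vanish. -/

open Complex Set Filter
open scoped ComplexConjugate RealInnerProductSpace

theorem MeasureTheory.SignedMeasure.totalVariation_eq_zero_of_forall_subset {α : Type*}
    [MeasurableSpace α] {μ : SignedMeasure α} {s : Set α} (hs : MeasurableSet s)
    (h : ∀ t, MeasurableSet t → t ⊆ s → μ t = 0) : μ.totalVariation s = 0 := by
  obtain ⟨i, hi, hi₂, hi₃, hpos, hneg⟩ := μ.toJordanDecomposition_spec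
  rw [SignedMeasure.totalVariation, Measure.add_apply, hpos, hneg,
    SignedMeasure.toMeasureOfZeroLE_apply _ _ _ hs, SignedMeasure.toMeasureOfLEZero_apply _ _ _ hs]
  simp [h _ (hi.inter hs) inter_subset_right, h _ (hi.compl.inter hs) inter_subset_right]

theorem csintegral_eq_zero_of_eqOn {α : Type*} [MeasurableSpace α] {μ : SignedMeasure α}
    {s : Set α} (hs : MeasurableSet s) (hμ : ∀ t, MeasurableSet t → t ⊆ sᶜ → μ t = 0)
    {f : α → ℂ} (hf : EqOn f 0 s) : csintegral μ f = 0 := by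
  have hnull := add_eq_zero.1 (μ.totalVariation_eq_zero_of_forall_subset hs.compl hμ)
  have hf_ae (ρ : Measure α) (hρ : ρ sᶜ = 0) : ∫ x, f x ∂ρ = 0 :=
    integral_eq_zero_of_ae (measure_eq_zero_iff_ae_notMem.1 hρ |>.mono fun x hx =>
      hf (not_not.1 hx))
  rw [csintegral, hf_ae _ hnull.1, hf_ae _ hnull.2, sub_zero]

theorem ae_eq_zero_of_integral_conj_mul_self_eq_zero {α : Type*} [MeasurableSpace α]
    {ν : Measure α} {F : α → ℂ} (hF : Integrable (fun x => ‖F x‖ ^ 2) ν)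
    (h : ∫ x, conj (F x) * F x ∂ν = 0) : F =ᵐ[ν] 0 := by
  simp_rw [conj_mul', ← ofReal_pow, integral_complex_ofReal, ofReal_eq_zero] at h
  filter_upwards [(integral_eq_zero_iff_of_nonneg (fun x => by positivity) hF).1 h] with x hx
  simpa using hx

theorem Continuous.eqOn_support_of_ae_eq {X Y : Type*} [TopologicalSpace X] [MeasurableSpace X]
    [TopologicalSpace Y] [T2Space Y] {ν : Measure X} {f g : X → Y} (hf : Continuous f)
    (hg : Continuous g) (h : f =ᵐ[ν] g) : EqOn f g ν.support := fun x hx => by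
  by_contra hne
  exact Measure.subset_compl_support_of_isOpen (isOpen_ne_fun hf hg) (ae_iff.1 h) hne hx

theorem measSupport_eq_support {X : Type*} [TopologicalSpace X] [MeasurableSpace X]
    (ν : Measure X) : measSupport ν = ν.support := by
  ext x
  simp only [measSupport, Measure.support_eq_forall_isOpen, mem_ofPred_eq]
  exact ⟨fun h U hxU hU => h U hU hxU, fun h U hU hxU => h U hxU hU⟩

section CharFun

variable {E : Type*} [NormedAddCommGroup E] [InnerProductSpace ℝ E] [MeasurableSpace E]

/-- The Fourier transform `μ̂ ξ` of the paper is `signedCharFun μ (-ξ)`. -/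
noncomputable def signedCharFun (μ : SignedMeasure E) (t : E) : ℂ :=
  csintegral μ fun x => exp (⟪x, t⟫ * I)

theorem signedCharFun_eq_sub (μ : SignedMeasure E) (t : E) :
    signedCharFun μ t =
      charFun μ.toJordanDecomposition.posPart t - charFun μ.toJordanDecomposition.negPart t :=
  rfl

theorem signedCharFun_neg (μ : SignedMeasure E) (t : E) :
    signedCharFun μ (-t) = conj (signedCharFun μ t) := by
  simp only [signedCharFun_eq_sub, charFun_neg, map_sub]

theorem norm_signedCharFun_le (μ : SignedMeasure E) (t : E) :
    ‖signedCharFun μ t‖ ≤ μ.totalVariation.real univ := by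
  rw [signedCharFun_eq_sub, SignedMeasure.totalVariation, measureReal_add_apply]
  exact (norm_sub_le _ _).trans (add_le_add (norm_charFun_le t) (norm_charFun_le t))

variable [BorelSpace E] [SecondCountableTopology E]

theorem continuous_signedCharFun (μ : SignedMeasure E) : Continuous (signedCharFun μ) :=
  continuous_charFun.sub continuous_charFun

theorem integral_integral_exp_inner_mul_swap (ρ ν : Measure E) [IsFiniteMeasure ρ]
    [IsFiniteMeasure ν] {φ : E → E} (hφ : Measurable φ) {g : E → ℂ}
    (hg : AEStronglyMeasurable g ν) {C : ℝ} (hC : ∀ ξ, ‖g ξ‖ ≤ C) :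
    ∫ x, ∫ ξ, exp (⟪x, φ ξ⟫ * I) * g ξ ∂ν ∂ρ = ∫ ξ, charFun ρ (φ ξ) * g ξ ∂ν := by
  have hint : Integrable (fun p : E × E => exp (⟪p.1, φ p.2⟫ * I) * g p.2) (ρ.prod ν) := by
    refine (integrable_const C).mono' ?_ (.of_forall fun p => ?_)
    · exact (by fun_prop : Measurable fun p : E × E => exp (⟪p.1, φ p.2⟫ * I))
        |>.aestronglyMeasurable.mul hg.comp_snd
    · rw [norm_mul, norm_exp_ofReal_mul_I, one_mul]
      exact hC p.2
  rw [integral_integral_swap hint]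
  simp_rw [integral_mul_const, charFun_apply]

theorem csintegral_integral_exp_inner_mul (μ : SignedMeasure E) (ν : Measure E)
    [IsFiniteMeasure ν] {φ : E → E} (hφ : Measurable φ) {g : E → ℂ}
    (hg : AEStronglyMeasurable g ν) {C : ℝ} (hC : ∀ ξ, ‖g ξ‖ ≤ C) :
    csintegral μ (fun x => ∫ ξ, exp (⟪x, φ ξ⟫ * I) * g ξ ∂ν) =
      ∫ ξ, signedCharFun μ (φ ξ) * g ξ ∂ν := by
  have hint (ρ : Measure E) [IsFiniteMeasure ρ] :
      Integrable (fun ξ => charFun ρ (φ ξ) * g ξ) ν := by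
    refine (integrable_const (ρ.real univ * C)).mono'
      ((measurable_charFun.comp hφ).aestronglyMeasurable.mul hg) (.of_forall fun ξ => ?_)
    rw [norm_mul]
    exact mul_le_mul (norm_charFun_le _) (hC ξ) (norm_nonneg _) measureReal_nonneg
  rw [csintegral, integral_integral_exp_inner_mul_swap _ _ hφ hg hC,
    integral_integral_exp_inner_mul_swap _ _ hφ hg hC, ← integral_sub (hint _) (hint _)]
  simp_rw [signedCharFun_eq_sub, sub_mul]

theorem csintegral_integral_exp_inner_sub (μ : SignedMeasure E) (ν : Measure E)
    [IsFiniteMeasure ν] (x : E) :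
    csintegral μ (fun t => ∫ ξ, exp (I * ⟪x - t, ξ⟫) ∂ν) =
      ∫ ξ, exp (⟪x, ξ⟫ * I) * signedCharFun μ (-ξ) ∂ν := by
  have hsplit (t ξ : E) : exp (I * ⟪x - t, ξ⟫) = exp (⟪t, -ξ⟫ * I) * exp (⟪x, ξ⟫ * I) := by
    rw [← exp_add, inner_sub_left, inner_neg_right]
    push_cast
    ring_nf
  simp_rw [hsplit, csintegral_integral_exp_inner_mul μ ν measurable_neg
    (by fun_prop : Measurable fun ξ : E => exp (⟪x, ξ⟫ * I)).aestronglyMeasurable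
    (fun ξ => (norm_exp_ofReal_mul_I _).le), mul_comm]

end CharFun

/-- For the translation-invariant kernel `K(x,y) = ∫ exp(i(x-y)·ξ) dν(ξ)` with finite
positive spectral measure `ν`, a finite signed measure `μ` supported on a Borel set `Z`
satisfies `∫_Z K(x,t) dμ(t) = 0` for all `x ∈ Z` if and only if its Fourier transform
vanishes on the support of `ν`. -/
theorem kernel_annihilation_iff_fourier_vanishes_on_support
    (d : ℕ) (ν : Measure (EuclideanSpace ℝ (Fin d))) [IsFiniteMeasure ν]
    (K : EuclideanSpace ℝ (Fin d) → EuclideanSpace ℝ (Fin d) → ℂ)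
    (hK : ∀ x y, K x y = ∫ ξ, Complex.exp (Complex.I * ((inner ℝ (x - y) ξ : ℝ))) ∂ν)
    (Z : Set (EuclideanSpace ℝ (Fin d))) (hZ : MeasurableSet Z)
    (μ : SignedMeasure (EuclideanSpace ℝ (Fin d)))
    (hsupp : ∀ s : Set (EuclideanSpace ℝ (Fin d)),
      MeasurableSet s → s ⊆ Zᶜ → μ s = 0) :
    (∀ x ∈ Z, csintegral μ (fun t => K x t) = 0) ↔
      ∀ ξ ∈ measSupport ν,
        csintegral μ (fun x => Complex.exp (-Complex.I * ((inner ℝ x ξ : ℝ)))) = 0 := by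
  set F := fun ξ => signedCharFun μ (-ξ) with hF
  have hF_cont : Continuous F := (continuous_signedCharFun μ).comp continuous_neg
  have hF_le (ξ) : ‖F ξ‖ ≤ μ.totalVariation.real univ := norm_signedCharFun_le μ (-ξ)
  have hfourier (ξ) : csintegral μ (fun x => exp (-I * ⟪x, ξ⟫)) = F ξ := by
    simp only [hF, signedCharFun, inner_neg_right, ofReal_neg, neg_mul, mul_comm I]
  have hkernel (x) : csintegral μ (fun t => K x t) = ∫ ξ, exp (⟪x, ξ⟫ * I) * F ξ ∂ν := by
    simp_rw [hK]
    exact csintegral_integral_exp_inner_sub μ ν x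
  simp_rw [hfourier, hkernel, measSupport_eq_support]
  constructor
  · intro h
    have henergy : ∫ ξ, conj (F ξ) * F ξ ∂ν = 0 := by
      rw [← csintegral_eq_zero_of_eqOn hZ hsupp h, csintegral_integral_exp_inner_mul μ ν
        (φ := fun ξ => ξ) measurable_id hF_cont.aestronglyMeasurable hF_le]
      simp_rw [hF, signedCharFun_neg, conj_conj]
    have hF_sq : Integrable (fun ξ => ‖F ξ‖ ^ 2) ν :=
      .of_bound (by fun_prop) (μ.totalVariation.real univ ^ 2) (.of_forall fun ξ => by
        simpa using pow_le_pow_left₀ (norm_nonneg _) (hF_le ξ) 2)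
    exact hF_cont.eqOn_support_of_ae_eq continuous_const
      (ae_eq_zero_of_integral_conj_mul_self_eq_zero hF_sq henergy)
  · intro h x _
    refine integral_eq_zero_of_ae ?_
    filter_upwards [ν.support_mem_ae] with ξ hξ
    simp [h ξ hξ]
end

section
/- Let X be a metric space, I a countable index set, and φₙ ∈ C(X) for n ∈ I such that the series K(x,y) = Σ_{n∈I} φₙ(x)φₙ(y) converges uniformly on Z × Z for every compact Z ⊆ X. Then for a compact set Z ⊆ X and a finite signed Borel measure μ on Z: ∫_Z K(x,y) dμ(y) = 0 for all x ∈ Z if and only if ∫_Z φₙ(y) dμ(y) = 0 for all n ∈ I. -/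
open MeasureTheory Filter

/-- Integral of a real-valued function against a finite signed Borel measure, via the
Jordan decomposition `μ = μ⁺ - μ⁻`. -/
noncomputable def sintegral {X : Type*} [MeasurableSpace X]
    (μ : SignedMeasure X) (f : X → ℝ) : ℝ :=
  (∫ x, f x ∂μ.toJordanDecomposition.posPart) -
    (∫ x, f x ∂μ.toJordanDecomposition.negPart)

/-!
Write `aₙ = ∫ φₙ dμ`. Integration against a finite signed measure concentrated on the compact
set `Z` is continuous for uniform convergence on `Z`, so pairing the expansion of `K` with `μ`
in the second variable gives `Σₙ aₙ φₙ(x) = ∫ K(x,y) dμ(y)`, uniformly in `x ∈ Z`. The reverse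
implication is then immediate. For the forward one the partial sums `Σ_{n∈s} aₙ φₙ` tend to `0`
uniformly on `Z`, and integrating them against `μ` once more gives `Σₙ aₙ² = 0`.
-/

section

variable {X : Type*} [MeasurableSpace X] {Z : Set X}

theorem MeasureTheory.Integrable.of_continuousOn_of_measure_compl_eq_zero [TopologicalSpace X]
    [OpensMeasurableSpace X] [T2Space X] {ν : Measure X} [IsFiniteMeasure ν]
    (hZ : IsCompact Z) (hν : ν Zᶜ = 0) {f : X → ℝ} (hf : ContinuousOn f Z) :
    Integrable f ν := by
  rw [← Measure.restrict_eq_self_of_ae_mem (mem_ae_iff.2 hν)]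
  exact hf.integrableOn_compact hZ

namespace MeasureTheory.SignedMeasure

variable {μ : SignedMeasure X} {T : Set X}

theorem totalVariation_apply_eq_zero_of_null_subsets (hT : MeasurableSet T)
    (h : ∀ s, MeasurableSet s → s ⊆ T → μ s = 0) : μ.totalVariation T = 0 := by
  obtain ⟨i, hi, hpos_le, hneg_le, hpos, hneg⟩ := μ.toJordanDecomposition_spec
  rw [totalVariation, Measure.add_apply, hpos, hneg, toMeasureOfZeroLE_apply _ hpos_le hi hT,
    toMeasureOfLEZero_apply _ hneg_le hi.compl hT]
  simp [h _ (hi.inter hT) Set.inter_subset_right, h _ (hi.compl.inter hT) Set.inter_subset_right]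

theorem posPart_apply_eq_zero_and_negPart_apply_eq_zero (h : μ.totalVariation T = 0) :
    μ.toJordanDecomposition.posPart T = 0 ∧ μ.toJordanDecomposition.negPart T = 0 := by
  rwa [totalVariation, Measure.add_apply, add_eq_zero] at h

theorem exists_pos_mul_totalVariation_lt {ε : ℝ} (hε : 0 < ε) :
    ∃ δ > 0, δ * μ.totalVariation.real Set.univ < ε := by
  refine ⟨ε / (μ.totalVariation.real Set.univ + 1), by positivity, ?_⟩
  rw [div_mul_eq_mul_div, div_lt_iff₀ (by positivity)]
  linarith

end MeasureTheory.SignedMeasure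

variable {μ : SignedMeasure X} {f g : X → ℝ}

theorem sintegral_const_mul (c : ℝ) (f : X → ℝ) :
    sintegral μ (fun y => c * f y) = c * sintegral μ f := by
  simp only [sintegral, integral_const_mul, mul_sub]

theorem sintegral_mul_const (c : ℝ) (f : X → ℝ) :
    sintegral μ (fun y => f y * c) = sintegral μ f * c := by
  simp only [sintegral, integral_mul_const, sub_mul]

theorem abs_sintegral_le (hμ : μ.totalVariation Zᶜ = 0) {C : ℝ} (hf : ∀ y ∈ Z, |f y| ≤ C) :
    |sintegral μ f| ≤ C * μ.totalVariation.real Set.univ := by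
  obtain ⟨hpos, hneg⟩ := μ.posPart_apply_eq_zero_and_negPart_apply_eq_zero hμ
  have hbound (ν : Measure X) (hν : ν Zᶜ = 0) : ∀ᵐ y ∂ν, ‖f y‖ ≤ C := by
    filter_upwards [mem_ae_iff.2 hν] with y hy using hf y hy
  calc |sintegral μ f| ≤ |∫ y, f y ∂μ.toJordanDecomposition.posPart| +
        |∫ y, f y ∂μ.toJordanDecomposition.negPart| := abs_sub _ _
    _ ≤ C * μ.toJordanDecomposition.posPart.real Set.univ +
        C * μ.toJordanDecomposition.negPart.real Set.univ :=
      add_le_add (norm_integral_le_of_norm_le_const (hbound _ hpos))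
        (norm_integral_le_of_norm_le_const (hbound _ hneg))
    _ = C * μ.totalVariation.real Set.univ := by
      rw [SignedMeasure.totalVariation, measureReal_add_apply, mul_add]

variable [TopologicalSpace X] [OpensMeasurableSpace X] [T2Space X]

theorem sintegral_sub (hZ : IsCompact Z) (hμ : μ.totalVariation Zᶜ = 0)
    (hf : ContinuousOn f Z) (hg : ContinuousOn g Z) :
    sintegral μ (fun y => f y - g y) = sintegral μ f - sintegral μ g := by
  obtain ⟨hpos, hneg⟩ := μ.posPart_apply_eq_zero_and_negPart_apply_eq_zero hμ
  simp only [sintegral,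
    integral_sub (.of_continuousOn_of_measure_compl_eq_zero hZ hpos hf)
      (.of_continuousOn_of_measure_compl_eq_zero hZ hpos hg),
    integral_sub (.of_continuousOn_of_measure_compl_eq_zero hZ hneg hf)
      (.of_continuousOn_of_measure_compl_eq_zero hZ hneg hg)]
  ring

theorem sintegral_finsetSum {ι : Type*} (s : Finset ι) {F : ι → X → ℝ}
    (hZ : IsCompact Z) (hμ : μ.totalVariation Zᶜ = 0) (hF : ∀ i ∈ s, ContinuousOn (F i) Z) :
    sintegral μ (fun y => ∑ i ∈ s, F i y) = ∑ i ∈ s, sintegral μ (F i) := by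
  obtain ⟨hpos, hneg⟩ := μ.posPart_apply_eq_zero_and_negPart_apply_eq_zero hμ
  simp only [sintegral, ← Finset.sum_sub_distrib,
    integral_finsetSum s fun i hi => .of_continuousOn_of_measure_compl_eq_zero hZ hpos (hF i hi),
    integral_finsetSum s fun i hi => .of_continuousOn_of_measure_compl_eq_zero hZ hneg (hF i hi)]

theorem dist_sintegral_le (hZ : IsCompact Z) (hμ : μ.totalVariation Zᶜ = 0)
    (hf : ContinuousOn f Z) (hg : ContinuousOn g Z) {ε : ℝ} (hfg : ∀ y ∈ Z, dist (f y) (g y) ≤ ε) :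
    dist (sintegral μ f) (sintegral μ g) ≤ ε * μ.totalVariation.real Set.univ := by
  rw [Real.dist_eq, ← sintegral_sub hZ hμ hf hg]
  exact abs_sintegral_le hμ hfg

theorem tendsto_sintegral_of_tendstoUniformlyOn {ι : Type*} {l : Filter ι} {F : ι → X → ℝ}
    (hZ : IsCompact Z) (hμ : μ.totalVariation Zᶜ = 0) (hF : ∀ i, ContinuousOn (F i) Z)
    (hf : ContinuousOn f Z) (h : TendstoUniformlyOn F f l Z) :
    Tendsto (fun i => sintegral μ (F i)) l (nhds (sintegral μ f)) := by
  rw [Metric.tendstoUniformlyOn_iff] at h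
  refine Metric.tendsto_nhds.2 fun ε hε => ?_
  obtain ⟨δ, hδ, hδε⟩ := μ.exists_pos_mul_totalVariation_lt hε
  filter_upwards [h δ hδ] with i hi
  rw [dist_comm]
  exact (dist_sintegral_le hZ hμ hf (hF i) fun y hy => (hi y hy).le).trans_lt hδε

theorem tendstoUniformlyOn_sintegral {α ι : Type*} {l : Filter ι} {F : ι → α → X → ℝ}
    {f : α → X → ℝ} {S : Set α} (hZ : IsCompact Z) (hμ : μ.totalVariation Zᶜ = 0)
    (hF : ∀ i, ∀ a ∈ S, ContinuousOn (F i a) Z) (hf : ∀ a ∈ S, ContinuousOn (f a) Z)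
    (h : TendstoUniformlyOn (fun i p => F i p.1 p.2) (fun p => f p.1 p.2) l (S ×ˢ Z)) :
    TendstoUniformlyOn (fun i a => sintegral μ (F i a)) (fun a => sintegral μ (f a)) l S := by
  rw [Metric.tendstoUniformlyOn_iff] at h ⊢
  intro ε hε
  obtain ⟨δ, hδ, hδε⟩ := μ.exists_pos_mul_totalVariation_lt hε
  filter_upwards [h δ hδ] with i hi a ha
  exact (dist_sintegral_le hZ hμ (hf a ha) (hF i a ha) fun y hy =>
    (hi (a, y) ⟨ha, hy⟩).le).trans_lt hδε

end

theorem hilbert_schmidt_annihilation_iff_compact_general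
    {X : Type*} [MetricSpace X] [MeasurableSpace X] [BorelSpace X]
    {I : Type*}
    (φ : I → X → ℝ) (hφ : ∀ n, Continuous (φ n))
    (K : X → X → ℝ)
    (huc : ∀ Z : Set X, IsCompact Z →
      TendstoUniformlyOn (fun (s : Finset I) (p : X × X) => ∑ n ∈ s, φ n p.1 * φ n p.2)
        (fun p => K p.1 p.2) atTop (Z ×ˢ Z))
    (Z : Set X) (hZ : IsCompact Z)
    (μ : SignedMeasure X)
    (hsupp : ∀ s : Set X, MeasurableSet s → s ⊆ Zᶜ → μ s = 0) :
    (∀ x ∈ Z, sintegral μ (fun y => K x y) = 0) ↔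
      ∀ n : I, sintegral μ (fun y => φ n y) = 0 := by
  have hμ : μ.totalVariation Zᶜ = 0 :=
    μ.totalVariation_apply_eq_zero_of_null_subsets hZ.isClosed.measurableSet.compl hsupp
  set a : I → ℝ := fun n => sintegral μ (φ n)
  have hKc : ContinuousOn (fun p : X × X => K p.1 p.2) (Z ×ˢ Z) :=
    (huc Z hZ).continuousOn (.of_forall fun s => by fun_prop)
  have hpartial (s : Finset I) (x : X) :
      sintegral μ (fun y => ∑ n ∈ s, φ n x * φ n y) = ∑ n ∈ s, φ n x * a n := by
    rw [sintegral_finsetSum s hZ hμ fun n _ => by fun_prop]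
    simp only [sintegral_const_mul, a]
  have hunif : TendstoUniformlyOn (fun s x => ∑ n ∈ s, φ n x * a n)
      (fun x => sintegral μ (fun y => K x y)) atTop Z := by
    simpa only [hpartial] using tendstoUniformlyOn_sintegral
      (F := fun s x y => ∑ n ∈ s, φ n x * φ n y) (f := fun x y => K x y) (S := Z) hZ hμ
      (fun s x _ => by fun_prop)
      (fun x hx => hKc.comp (continuous_const.prodMk continuous_id).continuousOn
        fun y hy => Set.mk_mem_prod hx hy)
      (huc Z hZ)
  constructor
  · intro h
    have hsq : HasSum (fun n => a n * a n) 0 := by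
      have hlim := tendsto_sintegral_of_tendstoUniformlyOn hZ hμ (fun s => by fun_prop)
        continuousOn_const (hunif.congr_right fun x hx => h x hx)
      have hsum (s : Finset I) :
          sintegral μ (fun x => ∑ n ∈ s, φ n x * a n) = ∑ n ∈ s, a n * a n := by
        rw [sintegral_finsetSum s hZ hμ fun n _ => by fun_prop]
        simp only [sintegral_mul_const, a]
      have hzero : sintegral μ (fun _ => (0 : ℝ)) = 0 := by simp [sintegral]
      simp only [hsum, hzero] at hlim
      exact hlim
    have hsq_eq := (hasSum_zero_iff_of_nonneg fun n => mul_self_nonneg (a n)).1 hsq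
    exact fun n => mul_self_eq_zero.1 (congrFun hsq_eq n)
  · intro h x hx
    have hlim := hunif.tendsto_at hx
    simp only [a, h, mul_zero, Finset.sum_const_zero] at hlim
    exact tendsto_nhds_unique hlim tendsto_const_nhds

/-- For a Hilbert-Schmidt kernel `K(x,y) = Σₙ φₙ(x)φₙ(y)` converging uniformly on compact
sets, a finite signed Borel measure `μ` supported on a compact set `Z` annihilates
`K(x,·)` for all `x ∈ Z` iff it annihilates each `φₙ`. -/
theorem hilbert_schmidt_annihilation_iff_compact
    {X : Type*} [MetricSpace X] [MeasurableSpace X] [BorelSpace X]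
    {I : Type*} [Countable I]
    (φ : I → X → ℝ) (hφ : ∀ n, Continuous (φ n))
    (K : X → X → ℝ) (hK : ∀ x y, K x y = ∑' n, φ n x * φ n y)
    (huc : ∀ Z : Set X, IsCompact Z →
      TendstoUniformlyOn (fun (s : Finset I) (p : X × X) => ∑ n ∈ s, φ n p.1 * φ n p.2)
        (fun p => K p.1 p.2) atTop (Z ×ˢ Z))
    (Z : Set X) (hZ : IsCompact Z)
    (μ : SignedMeasure X)
    (hsupp : ∀ s : Set X, MeasurableSet s → s ⊆ Zᶜ → μ s = 0) :
    (∀ x ∈ Z, sintegral μ (fun y => K x y) = 0) ↔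
      ∀ n : I, sintegral μ (fun y => φ n y) = 0 :=
  hilbert_schmidt_annihilation_iff_compact_general φ hφ K huc Z hZ μ hsupp
end

section
/- Let φₙ ∈ C₀(X) (n in a countable index set I) satisfy |φₙ(x)| ≤ λₙ with Σ λₙ < ∞, and let K(x,y) = Σₙ φₙ(x)φₙ(y). Then the linear span of {K(x,·) : x ∈ X} is dense in C₀(X) if and only if the linear span of {φₙ : n ∈ I} is dense in C₀(X). -/
/-!
The closed spans of `{K(x,·)}` and of `{φₙ}` coincide. Each `K(x,·) = Σₙ φₙ(x) φₙ` converges in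
`C₀(X)`, so it lies in the closed span of the `φₙ`. Conversely, by Hahn–Banach it suffices that a
functional `g` killing every `K(x,·)` kills every `φₙ`: with `cₙ = g(φₙ)`, the function
`Σₙ cₙ φₙ` takes the value `g(K(x,·)) = 0` at every `x`, hence `0 = g(Σₙ cₙ φₙ) = Σₙ cₙ²`.
-/

open Set Submodule
open scoped ZeroAtInfty

theorem Submodule.mem_topologicalClosure_of_forall_dual {E : Type*} [TopologicalSpace E]
    [AddCommGroup E] [IsTopologicalAddGroup E] [Module ℝ E] [ContinuousSMul ℝ E]
    [LocallyConvexSpace ℝ E] (p : Submodule ℝ E) {x : E}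
    (h : ∀ g : StrongDual ℝ E, (∀ v ∈ p, g v = 0) → g x = 0) : x ∈ p.topologicalClosure := by
  by_contra hx
  obtain ⟨f, u, hfx, hfu⟩ :=
    geometric_hahn_banach_point_closed p.topologicalClosure.convex p.isClosed_topologicalClosure hx
  -- a linear functional bounded below on a subspace vanishes there
  have hf : ∀ v ∈ p.topologicalClosure, f v = 0 := by
    intro v hv
    by_contra hfv
    have := hfu (((u - 1) / f v) • v) (smul_mem _ _ hv)
    rw [map_smul, smul_eq_mul, div_mul_cancel₀ _ hfv] at this
    linarith
  have hu : u < 0 := by simpa using hfu 0 (zero_mem _)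
  linarith [h f fun v hv => hf v (p.le_topologicalClosure hv)]

theorem summable_smul_of_abs_le_mul_norm {I E : Type*} [NormedAddCommGroup E] [NormedSpace ℝ E]
    [CompleteSpace E] {φ : I → E} (hφ : Summable fun n => ‖φ n‖ ^ 2) {a : I → ℝ} {C : ℝ}
    (ha : ∀ n, |a n| ≤ C * ‖φ n‖) : Summable fun n => a n • φ n :=
  .of_norm_bounded (hφ.mul_left C) fun n => by
    rw [norm_smul, Real.norm_eq_abs, sq, ← mul_assoc]
    exact mul_le_mul_of_nonneg_right (ha n) (norm_nonneg _)

namespace ZeroAtInftyContinuousMap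

variable {X β : Type*} [TopologicalSpace X] [NormedAddCommGroup β]

theorem norm_apply_le (f : C₀(X, β)) (x : X) : ‖f x‖ ≤ ‖f‖ :=
  f.toBCF.norm_coe_le_norm x

theorem norm_le_of_forall_norm_apply_le {f : C₀(X, β)} {C : ℝ} (hC : 0 ≤ C)
    (h : ∀ x, ‖f x‖ ≤ C) : ‖f‖ ≤ C :=
  (BoundedContinuousFunction.norm_le hC).2 h

theorem hasSum_apply {I : Type*} {f : I → C₀(X, β)} {a : C₀(X, β)} (h : HasSum f a) (x : X) :
    HasSum (fun n => f n x) (a x) :=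
  let eval : C₀(X, β) →+ β :=
    { toFun := fun f => f x, map_zero' := rfl, map_add' := fun _ _ => rfl }
  h.map eval ((continuous_apply x).comp
    (BoundedContinuousFunction.continuous_coe.comp isometry_toBCF.continuous))

theorem tsum_apply {I : Type*} {f : I → C₀(X, β)} (hf : Summable f) (x : X) :
    (∑' n, f n) x = ∑' n, f n x :=
  (hasSum_apply hf.hasSum x).tsum_eq.symm

end ZeroAtInftyContinuousMap

section KernelSection

variable {X I : Type*} [TopologicalSpace X] {φ : I → C₀(X, ℝ)}

open ZeroAtInftyContinuousMap

noncomputable def kernelSection (φ : I → C₀(X, ℝ)) (x : X) : C₀(X, ℝ) :=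
  ∑' n, φ n x • φ n

theorem summable_smul_apply_of_summable_norm_sq (hφ : Summable fun n => ‖φ n‖ ^ 2) (x : X) :
    Summable fun n => φ n x • φ n :=
  summable_smul_of_abs_le_mul_norm hφ (C := 1) fun n => by
    simpa using norm_apply_le (φ n) x

theorem kernelSection_apply (hφ : Summable fun n => ‖φ n‖ ^ 2) (x y : X) :
    kernelSection φ x y = ∑' n, φ n x * φ n y := by
  simp [kernelSection, tsum_apply (summable_smul_apply_of_summable_norm_sq hφ x)]

theorem kernelSection_mem_topologicalClosure_span (x : X) :
    kernelSection φ x ∈ (span ℝ (range φ)).topologicalClosure :=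
  tsum_mem (isClosed_topologicalClosure _) fun n =>
    le_topologicalClosure _ (smul_mem _ _ (subset_span (mem_range_self n)))

theorem apply_eq_zero_of_forall_apply_kernelSection_eq_zero (hφ : Summable fun n => ‖φ n‖ ^ 2)
    (g : StrongDual ℝ C₀(X, ℝ)) (hg : ∀ x, g (kernelSection φ x) = 0) (n : I) : g (φ n) = 0 := by
  set c := fun n => g (φ n)
  have hc : Summable fun n => c n • φ n :=
    summable_smul_of_abs_le_mul_norm hφ fun n => by simpa using g.le_opNorm (φ n)
  have hzero : ∑' n, c n • φ n = 0 := by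
    ext x
    have := hg x
    rw [kernelSection, g.map_tsum (summable_smul_apply_of_summable_norm_sq hφ x)] at this
    simpa [tsum_apply hc, mul_comm] using this
  have hsq : HasSum (fun n => c n * c n) 0 := by simpa [hzero] using hc.hasSum.mapL g
  have hsq_zero := (hasSum_zero_iff_of_nonneg fun n => mul_self_nonneg (c n)).1 hsq
  exact mul_self_eq_zero.1 (congrFun hsq_zero n)

theorem topologicalClosure_span_range_kernelSection (hφ : Summable fun n => ‖φ n‖ ^ 2) :
    (span ℝ (range (kernelSection φ))).topologicalClosure =
      (span ℝ (range φ)).topologicalClosure := by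
  refine le_antisymm (topologicalClosure_minimal _ ?_ (isClosed_topologicalClosure _))
    (topologicalClosure_minimal _ ?_ (isClosed_topologicalClosure _)) <;> rw [span_le] <;>
    rintro _ ⟨x, rfl⟩
  · exact kernelSection_mem_topologicalClosure_span x
  · exact mem_topologicalClosure_of_forall_dual _ fun g hg =>
      apply_eq_zero_of_forall_apply_kernelSection_eq_zero hφ g
        (fun y => hg _ (subset_span (mem_range_self y))) x

theorem summable_norm_sq_of_abs_apply_le {lam : I → ℝ} (hbd : ∀ n x, |φ n x| ≤ lam n)
    (hsum : Summable lam) : Summable fun n => ‖φ n‖ ^ 2 := by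
  have hnorm n : ‖φ n‖ ≤ |lam n| :=
    norm_le_of_forall_norm_apply_le (abs_nonneg _) fun x => (hbd n x).trans (le_abs_self _)
  have hle n : |lam n| ≤ ∑' m, |lam m| := hsum.abs.le_tsum n fun m _ => abs_nonneg _
  refine .of_nonneg_of_le (fun n => sq_nonneg _) (fun n => ?_) (hsum.abs.mul_left (∑' m, |lam m|))
  rw [sq]
  exact mul_le_mul ((hnorm n).trans (hle n)) (hnorm n) (norm_nonneg _)
    ((abs_nonneg _).trans (hle n))

end KernelSection

theorem hilbert_schmidt_c0_universal_iff_span_phi_dense_general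
    {X : Type*} [MetricSpace X] {I : Type*}
    (φ : I → ZeroAtInftyContinuousMap X ℝ)
    (lam : I → ℝ)
    (hbd : ∀ (n : I) (x : X), |φ n x| ≤ lam n)
    (hsum : Summable lam)
    (K : X → X → ℝ) (hK : ∀ x y, K x y = ∑' n, φ n x * φ n y) :
    Dense (Submodule.span ℝ
        {f : ZeroAtInftyContinuousMap X ℝ | ∃ x : X, ⇑f = fun y => K x y} :
        Set (ZeroAtInftyContinuousMap X ℝ)) ↔
      Dense (Submodule.span ℝ (Set.range φ) : Set (ZeroAtInftyContinuousMap X ℝ)) := by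
  have hφ := summable_norm_sq_of_abs_apply_le hbd hsum
  have hsections : {f : ZeroAtInftyContinuousMap X ℝ | ∃ x : X, ⇑f = fun y => K x y} =
      range (kernelSection φ) := by
    ext f
    simp only [mem_ofPred_eq, mem_range, eq_comm (a := kernelSection φ _), DFunLike.ext_iff,
      funext_iff, kernelSection_apply hφ, hK]
  simp only [dense_iff_topologicalClosure_eq_top, hsections,
    topologicalClosure_span_range_kernelSection hφ]

/-- For the kernel `K(x,y) = Σₙ φₙ(x)φₙ(y)` with `φₙ ∈ C₀(X)`, `|φₙ| ≤ λₙ` and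
`Σ λₙ < ∞`, the span of `{K(x,·) : x ∈ X}` is dense in `C₀(X)` iff the span of
`{φₙ : n ∈ I}` is dense in `C₀(X)`. -/
theorem hilbert_schmidt_c0_universal_iff_span_phi_dense
    {X : Type*} [MetricSpace X] {I : Type*} [Countable I]
    (φ : I → ZeroAtInftyContinuousMap X ℝ)
    (lam : I → ℝ) (hlam0 : ∀ n, 0 ≤ lam n)
    (hbd : ∀ (n : I) (x : X), |φ n x| ≤ lam n)
    (hsum : Summable lam)
    (K : X → X → ℝ) (hK : ∀ x y, K x y = ∑' n, φ n x * φ n y) :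
    Dense (Submodule.span ℝ
        {f : ZeroAtInftyContinuousMap X ℝ | ∃ x : X, ⇑f = fun y => K x y} :
        Set (ZeroAtInftyContinuousMap X ℝ)) ↔
      Dense (Submodule.span ℝ (Set.range φ) : Set (ZeroAtInftyContinuousMap X ℝ)) :=
  hilbert_schmidt_c0_universal_iff_span_phi_dense_general φ lam hbd hsum K hK
end
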